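/- arXiv:1407.3925 — 3 statements merged into one kernel-verified Lean document; each statement's English description precedes it below -/
import Mathlib

section
/- Let G_n be the Generalized Tribonacci sequence (G_0 = 0, G_1 = 0, G_2 = 1, G_{n+3} = P·G_{n+2} + Q·G_{n+1} + R·G_n) with characteristic roots α, β, γ distinct, and let w = e^(2πi/n). Suppose αw^(-j) ≠ 1, βw^(-j) ≠ 1, γw^(-j) ≠ 1. Then the sum over k = 0, ..., n-1 of G_{k+1}·w^(-jk) equals (G_{n+1} + (G_{n+2} - P·G_{n+1} - 1)·w^(-j) + R·G_n·w^(-2j)) / (P·w^(-j) + Q·w^(-2j) + R·w^(-3j) - 1). -/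
open Complex Finset

lemma tribo_key (P Q R : ℂ) (G : ℕ → ℂ)
    (hG0 : G 0 = 0) (hG1 : G 1 = 0) (hG2 : G 2 = 1)
    (hrec : ∀ n, G (n + 3) = P * G (n + 2) + Q * G (n + 1) + R * G n)
    (x : ℂ) (n : ℕ) :
    (P * x + Q * x ^ 2 + R * x ^ 3 - 1) * ∑ k ∈ Finset.range n, G (k + 1) * x ^ k =
      -x + x ^ n * G (n + 1) + x ^ (n + 1) * (G (n + 2) - P * G (n + 1))
        + x ^ (n + 2) * (R * G n) := by
  induction n with
  | zero => simp [hG0, hG1, hG2]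
  | succ n ih =>
      rw [Finset.sum_range_succ, mul_add, ih, hrec n]
      ring

theorem eigenvalue_circulant_generalized_tribonacci
    (P Q R : ℂ) (G : ℕ → ℂ)
    (hG0 : G 0 = 0) (hG1 : G 1 = 0) (hG2 : G 2 = 1)
    (hrec : ∀ n, G (n + 3) = P * G (n + 2) + Q * G (n + 1) + R * G n)
    (α β γ : ℂ)
    (hαβ : α ≠ β) (hαγ : α ≠ γ) (hβγ : β ≠ γ)
    (hsum : α + β + γ = P) (hprod2 : α * β + β * γ + α * γ = -Q)
    (hprod : α * β * γ = R)
    (n : ℕ) (hn : 0 < n) (j : ℕ) (hj : j < n)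
    (w : ℂ) (hw : w = Complex.exp (2 * Real.pi * Complex.I / n))
    (hα : α * w ^ (-(j : ℤ)) ≠ 1) (hβ' : β * w ^ (-(j : ℤ)) ≠ 1)
    (hγ' : γ * w ^ (-(j : ℤ)) ≠ 1)
    (hden : P * w ^ (-(j : ℤ)) + Q * w ^ (-2 * (j : ℤ)) + R * w ^ (-3 * (j : ℤ)) - 1 ≠ 0) :
    ∑ k ∈ Finset.range n, G (k + 1) * w ^ (-((j : ℤ) * k)) =
      (G (n + 1) + (G (n + 2) - P * G (n + 1) - 1) * w ^ (-(j : ℤ))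
        + R * G n * w ^ (-2 * (j : ℤ)))
      / (P * w ^ (-(j : ℤ)) + Q * w ^ (-2 * (j : ℤ)) + R * w ^ (-3 * (j : ℤ)) - 1) := by
  set x : ℂ := w ^ (-(j : ℤ)) with hx
  have hwn : w ^ n = 1 := by
    rw [hw, ← Complex.exp_nat_mul]
    have hn' : (n : ℂ) ≠ 0 := Nat.cast_ne_zero.mpr hn.ne'
    rw [mul_div_cancel₀ _ hn', Complex.exp_two_pi_mul_I]
  have hxn : x ^ n = 1 := by
    rw [hx, ← zpow_natCast (w ^ (-(j : ℤ))) n, ← zpow_mul]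
    rw [show -(j : ℤ) * n = n * -(j : ℤ) by ring, zpow_mul, zpow_natCast, hwn, one_zpow]
  have hx2 : w ^ (-2 * (j : ℤ)) = x ^ 2 := by
    rw [hx, ← zpow_natCast (w ^ (-(j : ℤ))) 2, ← zpow_mul]; congr 1; ring
  have hx3 : w ^ (-3 * (j : ℤ)) = x ^ 3 := by
    rw [hx, ← zpow_natCast (w ^ (-(j : ℤ))) 3, ← zpow_mul]; congr 1; ring
  have hsum' : ∀ k : ℕ, w ^ (-((j : ℤ) * k)) = x ^ k := by
    intro k
    rw [hx, ← zpow_natCast (w ^ (-(j : ℤ))) k, ← zpow_mul]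
    congr 1; ring
  simp only [hsum', hx2, hx3] at hden ⊢
  rw [eq_div_iff hden]
  have key := tribo_key P Q R G hG0 hG1 hG2 hrec x n
  rw [hxn] at key
  have h1 : x ^ (n + 1) = x := by rw [pow_succ, hxn, one_mul]
  have h2 : x ^ (n + 2) = x ^ 2 := by rw [pow_add, hxn, one_mul]
  rw [h1, h2] at key
  linear_combination key
end

section
/- Let G_n be the Generalized Tribonacci sequence with nonnegative integer parameters P, Q, R (not all zero, with P + Q + R ≥ 2) and let C_n(G) = circ(G_1, G_2, ..., G_n) be the n×n circulant matrix. Then the spectral norm of C_n(G) equals (G_{n+2} + (1 - P)·G_{n+1} + R·G_n - 1) / (P + Q + R - 1). -/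
/-! A circulant matrix is the combination `∑ₖ vₖ • Pₖ` of the permutation matrices of the
translations, which are isometries, so its operator norm is at most `∑ₖ ‖vₖ‖`; the constant
vector is an eigenvector with eigenvalue `∑ₖ vₖ`, so for nonnegative entries the norm is the row
sum `G₁ + ⋯ + Gₙ`. Summing the recurrence telescopes this row sum into the closed form. -/

open Finset
open scoped Matrix.Norms.L2Operator

namespace Matrix

variable {ι : Type*} [Fintype ι] [AddGroup ι]

theorem circulant_mulVec_const {α : Type*} [NonUnitalNonAssocSemiring α] (v : ι → α) (c : α) :
    circulant v *ᵥ (fun _ => c) = fun _ => (∑ k, v k) * c := by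
  ext i
  simp only [mulVec, dotProduct, circulant_apply, ← Finset.sum_mul]
  rw [Fintype.sum_equiv (Equiv.subLeft i) (fun j => v (i - j)) v fun _ => rfl]

variable [DecidableEq ι] {𝕜 : Type*} [RCLike 𝕜]

theorem circulant_eq_sum_smul_permMatrix (v : ι → 𝕜) :
    circulant v = ∑ k, v k • Equiv.Perm.permMatrix 𝕜 (Equiv.addLeft (-k)) := by
  ext i j
  simp only [Matrix.sum_apply, Matrix.smul_apply, circulant_apply]
  simp [neg_add_eq_iff_eq_add, ← sub_eq_iff_eq_add (a := i)]

theorem circulant_l2_opNorm_le (v : ι → 𝕜) : ‖circulant v‖ ≤ ∑ k, ‖v k‖ := by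
  rw [circulant_eq_sum_smul_permMatrix]
  refine (norm_sum_le _ _).trans (Finset.sum_le_sum fun k _ => ?_)
  calc ‖v k • Equiv.Perm.permMatrix 𝕜 (Equiv.addLeft (-k))‖
      ≤ ‖v k‖ * ‖Equiv.Perm.permMatrix 𝕜 (Equiv.addLeft (-k))‖ := norm_smul_le _ _
    _ ≤ ‖v k‖ * 1 := by gcongr; exact permMatrix_l2_opNorm_le _
    _ = ‖v k‖ := mul_one _

theorem norm_sum_le_circulant_l2_opNorm (v : ι → 𝕜) : ‖∑ k, v k‖ ≤ ‖circulant v‖ := by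
  cases isEmpty_or_nonempty ι with
  | inl _ => simp
  | inr _ =>
    set x : EuclideanSpace 𝕜 ι := WithLp.toLp 2 fun _ => 1
    have hx : 0 < ‖x‖ := by simp [x, funext_iff]
    have hCx : (EuclideanSpace.equiv ι 𝕜).symm (circulant v *ᵥ x.ofLp) = (∑ k, v k) • x := by
      ext i
      simp [x, circulant_mulVec_const]
    have h := (circulant v).l2_opNorm_mulVec x
    rw [hCx, norm_smul] at h
    exact le_of_mul_le_mul_right h hx

theorem circulant_l2_opNorm_of_nonneg {v : ι → ℝ} (hv : 0 ≤ v) :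
    ‖circulant (fun k => (v k : 𝕜))‖ = ∑ k, v k := by
  have hnorm : ∀ k, ‖(v k : 𝕜)‖ = v k := fun k => by simp [abs_of_nonneg (hv k)]
  refine le_antisymm ((circulant_l2_opNorm_le _).trans_eq (by simp only [hnorm])) ?_
  calc ∑ k, v k = ‖∑ k, (v k : 𝕜)‖ := by
        rw [← RCLike.ofReal_sum, RCLike.norm_ofReal,
          abs_of_nonneg (sum_nonneg fun k _ => hv k)]
    _ ≤ _ := norm_sum_le_circulant_l2_opNorm _

end Matrix

theorem Fin.val_sub_eq_toNat_emod {n : ℕ} (a b : Fin n) :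
    ((a - b : Fin n) : ℕ) = (((a : ℤ) - b) % n).toNat := by
  have key : ((a : ℤ) - b) % n = (((n - b + a) % n : ℕ) : ℤ) := by
    push_cast [Nat.cast_sub b.isLt.le]
    rw [show (n : ℤ) - b + a = (a - b) + n * 1 by ring, Int.add_mul_emod_self_left]
  rw [key, Int.toNat_natCast, Fin.sub_def]

theorem tribonacci_sum_mul {α : Type*} [CommRing α] (P Q R : α) (G : ℕ → α)
    (hG0 : G 0 = 0) (hG1 : G 1 = 0) (hG2 : G 2 = 1)
    (hrec : ∀ n, G (n + 3) = P * G (n + 2) + Q * G (n + 1) + R * G n) (m : ℕ) :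
    (P + Q + R - 1) * ∑ k ∈ range m, G (1 + k) = G (m + 2) + (1 - P) * G (m + 1) + R * G m - 1 := by
  induction m with
  | zero => simp [hG0, hG1, hG2]
  | succ m ih =>
    rw [sum_range_succ, mul_add, ih, add_comm 1 m, show m + 1 + 2 = m + 3 from rfl, hrec m]
    ring

theorem spectral_norm_circulant_generalized_tribonacci_general
    (P Q R : ℕ) (hge : 2 ≤ P + Q + R)
    (G : ℕ → ℕ) (hG0 : G 0 = 0) (hG1 : G 1 = 0) (hG2 : G 2 = 1)
    (hrec : ∀ n, G (n + 3) = P * G (n + 2) + Q * G (n + 1) + R * G n)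
    (n : ℕ) (hn : 0 < n)
    (C : Matrix (Fin n) (Fin n) ℂ)
    (hC : ∀ i j : Fin n, C i j = (G (1 + (((j : ℤ) - (i : ℤ)) % (n : ℤ)).toNat) : ℂ)) :
    ‖Matrix.toEuclideanCLM (𝕜 := ℂ) C‖ =
      ((G (n + 2) : ℝ) + (1 - (P : ℝ)) * G (n + 1) + R * G n - 1) / ((P : ℝ) + Q + R - 1) := by
  have : NeZero n := ⟨hn.ne'⟩
  set g : Fin n → ℝ := fun k => G (1 + (k : ℕ))
  -- Mathlib's `circulant v` has entries `v (i - j)`, whereas `C i j` depends on `j - i`.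
  have hCg : C = Matrix.circulant fun k => ((g (-k) : ℝ) : ℂ) := by
    ext i j
    simp only [hC, g, Matrix.circulant_apply, neg_sub, Fin.val_sub_eq_toNat_emod,
      Complex.ofReal_natCast]
  have hden : (0 : ℝ) < P + Q + R - 1 := by
    have : (2 : ℝ) ≤ P + Q + R := by exact_mod_cast hge
    linarith
  calc ‖Matrix.toEuclideanCLM (𝕜 := ℂ) C‖ = ‖Matrix.circulant fun k => ((g (-k) : ℝ) : ℂ)‖ := by
        rw [Matrix.l2_opNorm_toEuclideanCLM, hCg]
    _ = ∑ k, g (-k) := Matrix.circulant_l2_opNorm_of_nonneg fun k => Nat.cast_nonneg _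
    _ = ∑ k ∈ range n, (G (1 + k) : ℝ) :=
        (Fintype.sum_equiv (Equiv.neg _) _ g fun _ => rfl).trans
          (Fin.sum_univ_eq_sum_range (fun k => (G (1 + k) : ℝ)) n)
    _ = _ := by
        rw [eq_div_iff hden.ne', mul_comm]
        exact tribonacci_sum_mul (P : ℝ) Q R (fun k => (G k : ℝ)) (by simp [hG0]) (by simp [hG1])
          (by simp [hG2]) (fun m => by simp [hrec m]) n

theorem spectral_norm_circulant_generalized_tribonacci
    (P Q R : ℕ) (hPQR : ¬(P = 0 ∧ Q = 0 ∧ R = 0)) (hge : 2 ≤ P + Q + R)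
    (G : ℕ → ℕ) (hG0 : G 0 = 0) (hG1 : G 1 = 0) (hG2 : G 2 = 1)
    (hrec : ∀ n, G (n + 3) = P * G (n + 2) + Q * G (n + 1) + R * G n)
    (n : ℕ) (hn : 0 < n)
    (C : Matrix (Fin n) (Fin n) ℂ)
    (hC : ∀ i j : Fin n, C i j = (G (1 + (((j : ℤ) - (i : ℤ)) % (n : ℤ)).toNat) : ℂ)) :
    ‖Matrix.toEuclideanCLM (𝕜 := ℂ) C‖ =
      ((G (n + 2) : ℝ) + (1 - (P : ℝ)) * G (n + 1) + R * G n - 1) / ((P : ℝ) + Q + R - 1) :=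
  spectral_norm_circulant_generalized_tribonacci_general P Q R hge G hG0 hG1 hG2 hrec n hn C hC
end

section
/- Let G_n be the Generalized Tribonacci sequence (G_0 = 0, G_1 = 0, G_2 = 1, G_{n+3} = P·G_{n+2} + Q·G_{n+1} + R·G_n) with distinct complex characteristic roots α, β, γ, and assume G_{n+1} ≠ 0 and that α^n ≠ 1, β^n ≠ 1, γ^n ≠ 1. Let K, L be the two roots of G_{n+1}·t² - (P·G_{n+1} - G_{n+2} + 1)·t + R·G_n = 0. Then the determinant of the circulant matrix circ(G_1, ..., G_n) equals (G_{n+1})^n·(1 - K^n)(1 - L^n) / ((-1)^n·(1 - (α^n + β^n + γ^n) - R^n + (α^n·β^n + β^n·γ^n + α^n·γ^n))). -/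
open Finset Polynomial

lemma tribo_gen (P Q R : ℂ) (G : ℕ → ℂ)
    (hG0 : G 0 = 0) (hG1 : G 1 = 0) (hG2 : G 2 = 1)
    (hrec : ∀ m, G (m + 3) = P * G (m + 2) + Q * G (m + 1) + R * G m)
    (m : ℕ) (t : ℂ) :
    (1 - P*t - Q*t^2 - R*t^3) * (∑ k ∈ range (m+1), G (k+1) * t^k)
      = t - t^(m+1) * (G (m+2) + (Q * G (m+1) + R * G m) * t + R * G (m+1) * t^2) := by
  induction m with
  | zero => simp [hG0, hG1, hG2]
  | succ m ih =>
      rw [Finset.sum_range_succ, mul_add]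
      rw [ih]
      have h3 : m + 1 + 2 = m + 3 := rfl
      rw [h3, hrec m]
      ring

noncomputable def zmodFinEquiv (n : ℕ) [NeZero n] : Fin n ≃ ZMod n where
  toFun i := (i.val : ZMod n)
  invFun x := ⟨x.val, x.val_lt⟩
  left_inv i := by ext; simp [ZMod.val_cast_of_lt i.isLt]
  right_inv x := by simp [ZMod.natCast_rightInverse x]

lemma circ_det (n : ℕ) [NeZero n] (ζ : ℂ) (hζ : IsPrimitiveRoot ζ n) (v : ZMod n → ℂ)
    (A : Matrix (ZMod n) (ZMod n) ℂ) (hA : ∀ i j, A i j = v (j - i)) :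
    A.det = ∏ j : ZMod n, ∑ x : ZMod n, v x * ζ ^ (x.val * j.val) := by
  have hζn : ζ ^ n = 1 := hζ.pow_eq_one
  have hmod : ∀ a : ℕ, ζ ^ a = ζ ^ (a % n) := by
    intro a
    conv_lhs => rw [← Nat.div_add_mod a n]
    rw [pow_add, pow_mul, hζn, one_pow, one_mul]
  have hcong : ∀ a b : ℕ, a % n = b % n → ζ ^ a = ζ ^ b := by
    intro a b h; rw [hmod a, hmod b, h]
  set W : Matrix (ZMod n) (ZMod n) ℂ := Matrix.of fun i j => ζ ^ (i.val * j.val) with hW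
  set F : ZMod n → ℂ := fun j => ∑ x : ZMod n, v x * ζ ^ (x.val * j.val) with hF
  have key : A * W = W * Matrix.diagonal F := by
    ext i j
    rw [Matrix.mul_apply, Matrix.mul_diagonal]
    have h1 : ∀ x : ZMod n, A i x * W x j = v (x - i) * ζ ^ (x.val * j.val) := by
      intro x; rw [hA]; rfl
    calc ∑ x : ZMod n, A i x * W x j
        = ∑ x : ZMod n, v (x - i) * ζ ^ (x.val * j.val) := Finset.sum_congr rfl fun x _ => h1 x
      _ = ∑ y : ZMod n, v ((y + i) - i) * ζ ^ ((y + i).val * j.val) :=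
          (Equiv.sum_comp (Equiv.addRight i) fun x => v (x - i) * ζ ^ (x.val * j.val)).symm
      _ = ∑ y : ZMod n, v y * (ζ ^ (y.val * j.val) * ζ ^ (i.val * j.val)) := by
          refine Finset.sum_congr rfl fun y _ => ?_
          rw [add_sub_cancel_right, ← pow_add]
          congr 1
          apply hcong
          have h2 : (y + i).val ≡ y.val + i.val [MOD n] := by
            rw [ZMod.val_add]; exact Nat.mod_modEq _ n
          have h3 := h2.mul_right j.val
          calc (y + i).val * j.val % n = (y.val + i.val) * j.val % n := h3
            _ = (y.val * j.val + i.val * j.val) % n := by ring_nf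
      _ = ζ ^ (i.val * j.val) * F j := by
          rw [hF, Finset.mul_sum]
          exact Finset.sum_congr rfl fun y _ => by ring
      _ = W i j * F j := by rw [hW]; simp [Matrix.of_apply]
  have hWdet : W.det ≠ 0 := by
    have hsub : W.submatrix (zmodFinEquiv n) (zmodFinEquiv n)
        = Matrix.vandermonde (fun i : Fin n => ζ ^ (i : ℕ)) := by
      ext i j
      simp only [Matrix.submatrix_apply, Matrix.vandermonde, zmodFinEquiv, Equiv.coe_fn_mk,
        Matrix.of_apply, hW]
      rw [ZMod.val_cast_of_lt i.isLt, ZMod.val_cast_of_lt j.isLt, ← pow_mul]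
    have : W.det = (Matrix.vandermonde (fun i : Fin n => ζ ^ (i : ℕ))).det := by
      rw [← hsub, Matrix.det_submatrix_equiv_self]
    rw [this]
    rw [Ne, Matrix.det_vandermonde_eq_zero_iff]
    rintro ⟨i, j, hij, hne⟩
    exact hne (Fin.val_injective (hζ.pow_inj i.isLt j.isLt hij))
  have hdet := congrArg Matrix.det key
  rw [Matrix.det_mul, Matrix.det_mul, Matrix.det_diagonal] at hdet
  rw [mul_comm W.det] at hdet
  exact mul_right_cancel₀ hWdet hdet

lemma prod_one_sub_pow (n : ℕ) (hn : 0 < n) (ζ : ℂ) (hζ : IsPrimitiveRoot ζ n) (c : ℂ) :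
    ∏ j ∈ range n, (1 - c * ζ ^ j) = 1 - c ^ n := by
  rcases eq_or_ne c 0 with rfl | hc
  · simp [zero_pow hn.ne']
  · have hP := X_pow_sub_C_eq_prod hζ hn (one_pow n)
    have h2 := congrArg (Polynomial.eval c⁻¹) hP
    simp only [eval_sub, eval_pow, eval_X, eval_C, eval_prod, eval_mul, mul_one] at h2
    calc ∏ j ∈ range n, (1 - c * ζ ^ j) = ∏ j ∈ range n, c * (c⁻¹ - ζ ^ j) := by
          refine Finset.prod_congr rfl fun j _ => ?_
          rw [mul_sub, mul_inv_cancel₀ hc]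
      _ = c ^ n * ∏ j ∈ range n, (c⁻¹ - ζ ^ j) := by
          rw [Finset.prod_mul_distrib, Finset.prod_const, Finset.card_range]
      _ = c ^ n * (c⁻¹ ^ n - 1) := by rw [← h2]
      _ = 1 - c ^ n := by
          rw [mul_sub, mul_one, ← mul_pow, mul_inv_cancel₀ hc, one_pow]
set_option maxHeartbeats 1600000 in
theorem det_circulant_generalized_tribonacci
    (P Q R : ℂ) (G : ℕ → ℂ)
    (hG0 : G 0 = 0) (hG1 : G 1 = 0) (hG2 : G 2 = 1)
    (hrec : ∀ m, G (m + 3) = P * G (m + 2) + Q * G (m + 1) + R * G m)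
    (α β γ : ℂ)
    (hαβ : α ≠ β) (hαγ : α ≠ γ) (hβγ : β ≠ γ)
    (hsum : α + β + γ = P) (hprod2 : α * β + β * γ + α * γ = -Q)
    (hprod : α * β * γ = R)
    (n : ℕ) (hn : 0 < n)
    (hGn1 : G (n + 1) ≠ 0)
    (hα : α ^ n ≠ 1) (hβ' : β ^ n ≠ 1) (hγ' : γ ^ n ≠ 1)
    (K L : ℂ)
    (hK : G (n + 1) * K ^ 2 - (P * G (n + 1) - G (n + 2) + 1) * K + R * G n = 0)
    (hL : G (n + 1) * L ^ 2 - (P * G (n + 1) - G (n + 2) + 1) * L + R * G n = 0)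
    (hKL_sum : K + L = (P * G (n + 1) - G (n + 2) + 1) / G (n + 1))
    (hKL_prod : K * L = R * G n / G (n + 1))
    (C : Matrix (Fin n) (Fin n) ℂ)
    (hC : ∀ i j : Fin n, C i j = G (1 + (((j : ℤ) - (i : ℤ)) % (n : ℤ)).toNat)) :
    C.det = (G (n + 1)) ^ n * (1 - K ^ n) * (1 - L ^ n) /
      ((-1 : ℂ) ^ n * (1 - (α ^ n + β ^ n + γ ^ n) - R ^ n
        + (α ^ n * β ^ n + β ^ n * γ ^ n + α ^ n * γ ^ n))) := by
  obtain ⟨m, rfl⟩ : ∃ m, n = m + 1 := ⟨n - 1, (Nat.succ_pred_eq_of_pos hn).symm⟩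
  haveI : NeZero (m + 1) := ⟨Nat.succ_ne_zero m⟩
  have e2 : m + 1 + 1 = m + 2 := rfl
  have e3 : m + 1 + 2 = m + 3 := rfl
  rw [e2] at hGn1 hK hL hKL_sum hKL_prod ⊢
  rw [e3] at hK hL hKL_sum
  obtain ⟨ζ, hζ⟩ : ∃ ζ : ℂ, IsPrimitiveRoot ζ (m + 1) :=
    ⟨_, Complex.isPrimitiveRoot_exp (m + 1) (Nat.succ_ne_zero m)⟩
  set v : ZMod (m + 1) → ℂ := fun x => G (1 + x.val) with hv
  set A : Matrix (ZMod (m + 1)) (ZMod (m + 1)) ℂ := Matrix.of fun i j => v (j - i) with hA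
  -- C is a reindexing of A
  have hCA : C = A.submatrix (zmodFinEquiv (m + 1)) (zmodFinEquiv (m + 1)) := by
    ext i j
    rw [hC, Matrix.submatrix_apply]
    simp only [hA, hv, Matrix.of_apply, zmodFinEquiv, Equiv.coe_fn_mk]
    congr 2
    have h := ZMod.val_intCast (n := m + 1) ((j : ℤ) - (i : ℤ))
    have hcast : ((j.val : ZMod (m + 1)) - (i.val : ZMod (m + 1)))
        = (Int.cast ((j : ℤ) - (i : ℤ)) : ZMod (m + 1)) := by push_cast; ring
    rw [hcast, ← h, Int.toNat_natCast]
  have hdetCA : C.det = A.det := by rw [hCA, Matrix.det_submatrix_equiv_self]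
  have hdet := circ_det (m + 1) ζ hζ v A (fun i j => rfl)
  -- each eigenvalue as a polynomial sum
  have hFj : ∀ j : ZMod (m + 1), (∑ x : ZMod (m + 1), v x * ζ ^ (x.val * j.val))
      = ∑ k ∈ range (m + 1), G (k + 1) * (ζ ^ j.val) ^ k := by
    intro j
    rw [← Fin.sum_univ_eq_sum_range (fun k => G (k + 1) * (ζ ^ j.val) ^ k) (m + 1)]
    apply Fintype.sum_equiv (zmodFinEquiv (m + 1)).symm
    intro x
    simp only [zmodFinEquiv, Equiv.coe_fn_symm_mk, hv]
    rw [add_comm 1 x.val, mul_comm x.val j.val, pow_mul]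
  -- Vieta-type relations
  rw [eq_div_iff hGn1] at hKL_sum hKL_prod
  -- key pointwise identity
  have hkey : ∀ j : ZMod (m + 1),
      (∑ x : ZMod (m + 1), v x * ζ ^ (x.val * j.val))
        * ((1 - α * ζ ^ j.val) * ((1 - β * ζ ^ j.val) * (1 - γ * ζ ^ j.val)))
      = -(G (m + 2)) * ((1 - K * ζ ^ j.val) * (1 - L * ζ ^ j.val)) := by
    intro j
    set z : ℂ := ζ ^ j.val with hzdef
    have hz1 : z ^ (m + 1) = 1 := by
      rw [hzdef, ← pow_mul, mul_comm, pow_mul, hζ.pow_eq_one, one_pow]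
    have hfac : (1 - α * z) * ((1 - β * z) * (1 - γ * z)) = 1 - P * z - Q * z ^ 2 - R * z ^ 3 := by
      linear_combination (-z) * hsum + (z ^ 2) * hprod2 + (-(z ^ 3)) * hprod
    have hgen := tribo_gen P Q R G hG0 hG1 hG2 hrec m z
    rw [hz1, one_mul] at hgen
    rw [hFj j, ← hzdef, mul_comm, hfac, hgen]
    linear_combination z * hrec m - z * hKL_sum + z ^ 2 * hKL_prod
  -- products over all roots of unity
  have hone : ∀ c : ℂ, ∏ j : ZMod (m + 1), (1 - c * ζ ^ j.val) = 1 - c ^ (m + 1) := by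
    intro c
    rw [← prod_one_sub_pow (m + 1) (Nat.succ_pos m) ζ hζ c,
      ← Fin.prod_univ_eq_prod_range (fun k => 1 - c * ζ ^ k) (m + 1)]
    apply Fintype.prod_equiv (zmodFinEquiv (m + 1)).symm
    intro x
    simp [zmodFinEquiv]
  have hprodall : A.det * ((1 - α ^ (m + 1)) * ((1 - β ^ (m + 1)) * (1 - γ ^ (m + 1))))
      = (-(G (m + 2))) ^ (m + 1) * ((1 - K ^ (m + 1)) * (1 - L ^ (m + 1))) := by
    calc A.det * ((1 - α ^ (m + 1)) * ((1 - β ^ (m + 1)) * (1 - γ ^ (m + 1))))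
        = (∏ j : ZMod (m + 1), ∑ x : ZMod (m + 1), v x * ζ ^ (x.val * j.val))
            * ((∏ j : ZMod (m + 1), (1 - α * ζ ^ j.val))
              * ((∏ j : ZMod (m + 1), (1 - β * ζ ^ j.val))
                * (∏ j : ZMod (m + 1), (1 - γ * ζ ^ j.val)))) := by
          rw [hdet, hone α, hone β, hone γ]
      _ = ∏ j : ZMod (m + 1), ((∑ x : ZMod (m + 1), v x * ζ ^ (x.val * j.val))
            * ((1 - α * ζ ^ j.val) * ((1 - β * ζ ^ j.val) * (1 - γ * ζ ^ j.val)))) := by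
          rw [← Finset.prod_mul_distrib, ← Finset.prod_mul_distrib, ← Finset.prod_mul_distrib]
      _ = ∏ j : ZMod (m + 1), (-(G (m + 2)) * ((1 - K * ζ ^ j.val) * (1 - L * ζ ^ j.val))) :=
          Finset.prod_congr rfl fun j _ => hkey j
      _ = (-(G (m + 2))) ^ (m + 1) * ((1 - K ^ (m + 1)) * (1 - L ^ (m + 1))) := by
          rw [Finset.prod_mul_distrib, Finset.prod_mul_distrib, Finset.prod_const,
            Finset.card_univ, ZMod.card, hone K, hone L]
  rw [← hdetCA] at hprodall
  -- nonvanishing of the denominator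
  have hα0 : (1 : ℂ) - α ^ (m + 1) ≠ 0 := sub_ne_zero.mpr (Ne.symm hα)
  have hβ0 : (1 : ℂ) - β ^ (m + 1) ≠ 0 := sub_ne_zero.mpr (Ne.symm hβ')
  have hγ0 : (1 : ℂ) - γ ^ (m + 1) ≠ 0 := sub_ne_zero.mpr (Ne.symm hγ')
  have hD : (1 : ℂ) - (α ^ (m + 1) + β ^ (m + 1) + γ ^ (m + 1)) - R ^ (m + 1)
      + (α ^ (m + 1) * β ^ (m + 1) + β ^ (m + 1) * γ ^ (m + 1) + α ^ (m + 1) * γ ^ (m + 1))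
      = (1 - α ^ (m + 1)) * ((1 - β ^ (m + 1)) * (1 - γ ^ (m + 1))) := by
    have hR : R ^ (m + 1) = α ^ (m + 1) * β ^ (m + 1) * γ ^ (m + 1) := by
      rw [← hprod, mul_pow, mul_pow]
    linear_combination -hR
  rw [hD]
  have hden0 : ((-1 : ℂ)) ^ (m + 1)
      * ((1 - α ^ (m + 1)) * ((1 - β ^ (m + 1)) * (1 - γ ^ (m + 1)))) ≠ 0 :=
    mul_ne_zero (pow_ne_zero _ (by norm_num)) (mul_ne_zero hα0 (mul_ne_zero hβ0 hγ0))
  rw [eq_div_iff hden0]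
  have hneg : ((-1 : ℂ)) ^ (m + 1) * ((-1 : ℂ)) ^ (m + 1) = 1 := by
    rw [← mul_pow]; norm_num
  have hnegG : (-(G (m + 2))) ^ (m + 1) = (-1 : ℂ) ^ (m + 1) * (G (m + 2)) ^ (m + 1) := by
    rw [neg_pow]
  rw [hnegG] at hprodall
  linear_combination ((-1 : ℂ)) ^ (m + 1) * hprodall
    + (G (m + 2)) ^ (m + 1) * ((1 - K ^ (m + 1)) * (1 - L ^ (m + 1))) * hneg
end
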